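/- Let p(ρ) = c₀ρ³ + c₁ with c₀ > 0, so A(ρ) = ρ⁻¹√(p′(ρ)) = √(3c₀). Then on the open set where u ≠ ±ρ√(3c₀), the Lie bracket [X₊, Y₊] of X₊ = √(3c₀)∂_u + ∂_ρ and Y₊ = (u - ρ√(3c₀))⁻¹∂_t + ∂_x vanishes identically, hence the characteristic distribution C₊ = ⟨X₊,Y₊⟩ is integrable. -/

import Mathlib

/-! X₊ is the constant field v = (0, 0, √(3c₀), 1), so [X₊, Y₊] is the
derivative of Y₊ in the direction v. But Y₊ depends on the point only through
u - ρ√(3c₀), which is constant along the lines z + s v. -/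

/- Coordinates on ℝ⁴: 0 = t, 1 = x, 2 = u, 3 = ρ. -/

noncomputable def pd (i : Fin 4) (f : (Fin 4 → ℝ) → ℝ) (z : Fin 4 → ℝ) : ℝ :=
  deriv (fun s => f (Function.update z i s)) (z i)

noncomputable def lieBracket (X Y : (Fin 4 → ℝ) → Fin 4 → ℝ) (z : Fin 4 → ℝ) :
    Fin 4 → ℝ :=
  fun i => (∑ j, X z j * pd j (fun w => Y w i) z)
    - ∑ j, Y z j * pd j (fun w => X w i) z

noncomputable def Xplus (c0 : ℝ) (z : Fin 4 → ℝ) : Fin 4 → ℝ :=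
  ![0, 0, Real.sqrt (3 * c0), 1]

noncomputable def Yplus (c0 : ℝ) (z : Fin 4 → ℝ) : Fin 4 → ℝ :=
  ![(z 2 - z 3 * Real.sqrt (3 * c0))⁻¹, 1, 0, 0]

theorem pd_eq_fderiv {f : (Fin 4 → ℝ) → ℝ} {z : Fin 4 → ℝ} (hf : DifferentiableAt ℝ f z)
    (i : Fin 4) : pd i f z = fderiv ℝ f z (Pi.single i 1) := by
  have hf' : HasFDerivAt f (fderiv ℝ f z) (Function.update z i (z i)) := by
    rw [Function.update_eq_self]; exact hf.hasFDerivAt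
  exact (hf'.comp_hasDerivAt (z i) (hasDerivAt_update z i (z i))).deriv

theorem pd_const (i : Fin 4) (c : ℝ) (z : Fin 4 → ℝ) : pd i (fun _ => c) z = 0 :=
  deriv_const _ c

theorem sum_mul_pd_eq_fderiv {f : (Fin 4 → ℝ) → ℝ} {z : Fin 4 → ℝ}
    (hf : DifferentiableAt ℝ f z) (v : Fin 4 → ℝ) :
    ∑ j, v j * pd j f z = fderiv ℝ f z v := by
  calc ∑ j, v j * pd j f z = ∑ j, fderiv ℝ f z (v j • Pi.single j 1) := by
        simp only [pd_eq_fderiv hf, map_smul, smul_eq_mul]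
    _ = fderiv ℝ f z v := by
        rw [← map_sum]
        congr 1
        ext k
        simp [Finset.sum_apply, Pi.single_apply]

theorem DifferentiableAt.fderiv_apply_eq_zero_of_forall_add_smul {𝕜 E F : Type*}
    [NontriviallyNormedField 𝕜] [NormedAddCommGroup E] [NormedSpace 𝕜 E]
    [NormedAddCommGroup F] [NormedSpace 𝕜 F] {f : E → F} {z v : E}
    (hf : DifferentiableAt 𝕜 f z) (hv : ∀ s : 𝕜, f (z + s • v) = f z) :
    fderiv 𝕜 f z v = 0 := by
  rw [← hf.lineDeriv_eq_fderiv, lineDeriv, funext hv, deriv_const]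

theorem lieBracket_const_eq_zero_of_forall_add_smul {v z : Fin 4 → ℝ}
    {Y : (Fin 4 → ℝ) → Fin 4 → ℝ}
    (hY : ∀ i, DifferentiableAt ℝ (fun w => Y w i) z) (hv : ∀ s : ℝ, Y (z + s • v) = Y z) :
    lieBracket (fun _ => v) Y z = 0 := by
  funext i
  simp only [lieBracket, pd_const, mul_zero, Finset.sum_const_zero, sub_zero,
    sum_mul_pd_eq_fderiv (hY i)]
  exact (hY i).fderiv_apply_eq_zero_of_forall_add_smul fun s => congrFun (hv s) i

theorem Yplus_add_smul_Xplus (c0 : ℝ) (z : Fin 4 → ℝ) (s : ℝ) :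
    Yplus c0 (z + s • Xplus c0 z) = Yplus c0 z := by
  have h2 : Xplus c0 z 2 = Real.sqrt (3 * c0) := rfl
  have h3 : Xplus c0 z 3 = 1 := rfl
  simp only [Yplus, Pi.add_apply, Pi.smul_apply, smul_eq_mul, h2, h3]
  congr 1
  ring

theorem differentiableAt_Yplus {c0 : ℝ} {z : Fin 4 → ℝ} (hz : z 2 ≠ z 3 * Real.sqrt (3 * c0))
    (i : Fin 4) : DifferentiableAt ℝ (fun w => Yplus c0 w i) z := by
  fin_cases i
  · exact ((differentiableAt_apply 2 z).sub
      ((differentiableAt_apply 3 z).mul_const _)).inv (sub_ne_zero.mpr hz)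
  all_goals exact differentiableAt_const _

theorem bracket_vanishes_for_cubic_pressure_general (c0 : ℝ) :
    ∀ z : Fin 4 → ℝ, 0 < z 3 →
      z 2 ≠ z 3 * Real.sqrt (3 * c0) → z 2 ≠ -(z 3 * Real.sqrt (3 * c0)) →
      lieBracket (Xplus c0) (Yplus c0) z = 0 ∧
      ∃ a b : ℝ, lieBracket (Xplus c0) (Yplus c0) z
        = a • Xplus c0 z + b • Yplus c0 z := by
  intro z _ hz _
  have hbracket : lieBracket (Xplus c0) (Yplus c0) z = 0 :=
    lieBracket_const_eq_zero_of_forall_add_smul (v := Xplus c0 z)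
      (differentiableAt_Yplus hz) (Yplus_add_smul_Xplus c0 z)
  exact ⟨hbracket, 0, 0, by simp [hbracket]⟩

theorem bracket_vanishes_for_cubic_pressure (c0 : ℝ) (hc0 : 0 < c0) :
    ∀ z : Fin 4 → ℝ, 0 < z 3 →
      z 2 ≠ z 3 * Real.sqrt (3 * c0) → z 2 ≠ -(z 3 * Real.sqrt (3 * c0)) →
      lieBracket (Xplus c0) (Yplus c0) z = 0 ∧
      ∃ a b : ℝ, lieBracket (Xplus c0) (Yplus c0) z
        = a • Xplus c0 z + b • Yplus c0 z :=
  bracket_vanishes_for_cubic_pressure_general c0
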